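/- arXiv:2005.07637 — 3 statements merged into one kernel-verified Lean document; each statement's English description precedes it below -/
import Mathlib

section
/- Let G be a finite simple graph with m ≥ 1 edges on vertex set V. Define U₀ = V and, for each i ≥ 0, U_{i+1} = { v ∈ U_i : the degree of v in the induced subgraph G[U_i] is strictly greater than 3·√(2m) }. Then for every i with U_i nonempty, |U_{i+1}| < (2/3)·|U_i|; consequently |U_i| ≤ (2/3)^i · |V| for all i, and U_i = ∅ for every i with (2/3)^i · |V| < 1. -/
/-- Let `G` be a finite simple graph with `m ≥ 1` edges on vertex set `V`.
Define `U 0 = V` and `U (i+1) = { v ∈ U i : deg_{G[U i]}(v) > 3 * √(2m) }`.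
Then `|U (i+1)| < (2/3) * |U i|` whenever `U i` is nonempty, `|U i| ≤ (2/3)^i * |V|`
for all `i`, and `U i = ∅` whenever `(2/3)^i * |V| < 1`. -/
theorem stmt_3 {V : Type*} [Fintype V] [DecidableEq V] (G : SimpleGraph V)
    [DecidableRel G.Adj] (m : ℕ) (hm : m = G.edgeFinset.card) (hm1 : 1 ≤ m)
    (U : ℕ → Finset V) (hU0 : U 0 = Finset.univ)
    (hUs : ∀ i, ∀ v : V, v ∈ U (i + 1) ↔ v ∈ U i ∧
      3 * Real.sqrt (2 * m) < (((U i).filter (fun u => G.Adj v u)).card : ℝ)) :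
    (∀ i, (U i).Nonempty → ((U (i + 1)).card : ℝ) < (2 / 3) * (U i).card) ∧
    (∀ i, ((U i).card : ℝ) ≤ (2 / 3) ^ i * Fintype.card V) ∧
    (∀ i, ((2 : ℝ) / 3) ^ i * Fintype.card V < 1 → U i = ∅) := by
  have hmpos : (0 : ℝ) < 2 * m := by positivity
  have hsq : (0 : ℝ) < Real.sqrt (2 * m) := Real.sqrt_pos.mpr hmpos
  have hsqsq : Real.sqrt (2 * m) * Real.sqrt (2 * m) = 2 * m :=
    Real.mul_self_sqrt (le_of_lt hmpos)
  -- degree sum bound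
  have hsum : ∀ i, ∑ v ∈ U (i+1), (((U i).filter (fun u => G.Adj v u)).card : ℝ) ≤ 2 * m := by
    intro i
    have h1 : ∑ v ∈ U (i+1), ((U i).filter (fun u => G.Adj v u)).card
        ≤ ∑ v : V, G.degree v := by
      calc ∑ v ∈ U (i+1), ((U i).filter (fun u => G.Adj v u)).card
          ≤ ∑ v ∈ U (i+1), G.degree v := by
            apply Finset.sum_le_sum
            intro v _
            apply Finset.card_le_card
            intro u hu
            rw [Finset.mem_filter] at hu
            exact SimpleGraph.mem_neighborFinset _ _ _ |>.mpr hu.2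
        _ ≤ ∑ v : V, G.degree v :=
            Finset.sum_le_sum_of_subset (Finset.subset_univ _)
    have h2 : ∑ v : V, G.degree v = 2 * m := by
      rw [SimpleGraph.sum_degrees_eq_twice_card_edges, hm]
    have := h1.trans_eq h2
    calc ∑ v ∈ U (i+1), (((U i).filter (fun u => G.Adj v u)).card : ℝ)
        = ((∑ v ∈ U (i+1), ((U i).filter (fun u => G.Adj v u)).card : ℕ) : ℝ) := by
          push_cast; ring
      _ ≤ ((2 * m : ℕ) : ℝ) := by exact_mod_cast this
      _ = 2 * m := by push_cast; ring
  have part1 : ∀ i, (U i).Nonempty → ((U (i + 1)).card : ℝ) < (2 / 3) * (U i).card := by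
    intro i hne
    by_cases h : (U (i+1)).Nonempty
    · obtain ⟨v, hv⟩ := h
      obtain ⟨hv1, hv2⟩ := (hUs i v).1 hv
      have hUi : 3 * Real.sqrt (2 * m) < ((U i).card : ℝ) := by
        refine hv2.trans_le ?_
        exact_mod_cast Finset.card_le_card (Finset.filter_subset _ _)
      have hlt : ((U (i+1)).card : ℝ) * (3 * Real.sqrt (2 * m)) < 2 * m := by
        have hs : ∑ _v ∈ U (i+1), (3 * Real.sqrt (2 * m))
            < ∑ v ∈ U (i+1), (((U i).filter (fun u => G.Adj v u)).card : ℝ) := by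
          apply Finset.sum_lt_sum_of_nonempty ⟨v, hv⟩
          intro w hw
          exact ((hUs i w).1 hw).2
        rw [Finset.sum_const, nsmul_eq_mul] at hs
        exact hs.trans_le (hsum i)
      nlinarith [hsq, (by positivity : (0:ℝ) ≤ ((U (i+1)).card : ℝ)), hsqsq]
    · rw [Finset.not_nonempty_iff_eq_empty] at h
      rw [h]
      simp only [Finset.card_empty, Nat.cast_zero]
      have : (0:ℝ) < (U i).card := by exact_mod_cast Finset.card_pos.mpr hne
      linarith
  have part2 : ∀ i, ((U i).card : ℝ) ≤ (2 / 3) ^ i * Fintype.card V := by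
    intro i
    induction i with
    | zero => simp [hU0]
    | succ n ih =>
      by_cases h : (U n).Nonempty
      · have := part1 n h
        calc ((U (n+1)).card : ℝ) ≤ (2/3) * (U n).card := le_of_lt this
          _ ≤ (2/3) * ((2/3)^n * Fintype.card V) := by linarith
          _ = (2/3)^(n+1) * Fintype.card V := by ring
      · rw [Finset.not_nonempty_iff_eq_empty] at h
        have he : U (n+1) = ∅ := by
          ext v
          simp [hUs n v, h]
        rw [he]
        simp
        positivity
  refine ⟨part1, part2, ?_⟩
  intro i hi
  have := (part2 i).trans_lt hi
  have : (U i).card = 0 := by exact_mod_cast Nat.lt_one_iff.mp (by exact_mod_cast this)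
  exact Finset.card_eq_zero.mp this
end

section
/- Let G = (V,E) be a finite connected simple graph and let w₁, w₂ : E → ℝ be injective edge-weight functions with w₁(e) ≤ w₂(e) for all e ∈ E. Let E⁺ = { e ∈ E : w₂(e) > w₁(e) }. If T₁ is a minimum-weight spanning tree of G with respect to w₁ and T₂ is a minimum-weight spanning tree of G with respect to w₂, then T₁ \ E⁺ ⊆ T₂. -/
/-- The edge set `S` is acyclic: the graph `(V, S)` contains no cycle. -/
def EdgesAcyclic {V : Type*} (S : Finset (Sym2 V)) : Prop :=
  (SimpleGraph.fromEdgeSet (S : Set (Sym2 V))).IsAcyclic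

/-- The edge set `S` spans a connected graph `(V, S)` on the whole vertex set. -/
def EdgesConnected {V : Type*} (S : Finset (Sym2 V)) : Prop :=
  (SimpleGraph.fromEdgeSet (S : Set (Sym2 V))).Connected

/-- `T` is a spanning tree of `G`: a subset of the edges of `G` such that the
subgraph `(V, T)` is connected and acyclic. -/
def IsSpanningTree {V : Type*} (G : SimpleGraph V) (T : Finset (Sym2 V)) : Prop :=
  (T : Set (Sym2 V)) ⊆ G.edgeSet ∧ EdgesConnected T ∧ EdgesAcyclic T

/-- The weight of an edge set: `w(S) = ∑_{e ∈ S} w(e)`. -/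
def wsum {V : Type*} (w : Sym2 V → ℝ) (S : Finset (Sym2 V)) : ℝ := ∑ e ∈ S, w e

/-- `T` is a minimum-weight spanning tree of `G` with respect to `w`. -/
def IsMST {V : Type*} (G : SimpleGraph V) (w : Sym2 V → ℝ) (T : Finset (Sym2 V)) : Prop :=
  IsSpanningTree G T ∧ ∀ T' : Finset (Sym2 V), IsSpanningTree G T' → wsum w T ≤ wsum w T'

/-!
If an edge `e = s(a, b) ∈ T₁` with `w₁ e = w₂ e` were missing from `T₂`, the `T₂`-path from `a`
to `b` would cross the cut of `T₁ - e` at some edge `f ∉ T₁`. Then `T₁ - e + f` and `T₂ - f + e`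
are both spanning trees, so `w₂ e = w₁ e ≤ w₁ f ≤ w₂ f ≤ w₂ e`, and injectivity of `w₂` forces
`f = e ∈ T₂`.
-/

namespace SimpleGraph

variable {V : Type*} {H : SimpleGraph V}

lemma Reachable.deleteEdges_reachable_or {z x : V} (h : H.Reachable z x) (y : V) :
    (H.deleteEdges {s(x, y)}).Reachable z x ∨ (H.deleteEdges {s(x, y)}).Reachable z y := by
  obtain ⟨p⟩ := h
  induction p with
  | nil => exact Or.inl .rfl
  | @cons a m x hadj _ ih =>
    by_cases he : s(a, m) = s(x, y)
    · rcases Sym2.eq_iff.mp he with ⟨rfl, -⟩ | ⟨rfl, -⟩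
      · exact Or.inl .rfl
      · exact Or.inr .rfl
    · have hadj' : (H.deleteEdges {s(x, y)}).Adj a m := by simpa [he] using hadj
      exact ih.imp hadj'.reachable.trans hadj'.reachable.trans

lemma IsAcyclic.not_reachable_deleteEdges_of_mem_edges (hH : H.IsAcyclic) {u v : V}
    {p : H.Walk u v} (hp : p.IsPath) {e : Sym2 V} (he : e ∈ p.edges) :
    ¬(H.deleteEdges {e}).Reachable u v := by
  classical
  rintro ⟨q⟩
  have hpq : p = q.bypass.mapLe (deleteEdges_le _) := congrArg Subtype.val <|
    (hH.subsingleton_path u v).elim ⟨p, hp⟩ ⟨_, q.bypass_isPath.mapLe _⟩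
  have : e ∈ (H.deleteEdges {e}).edgeSet :=
    q.bypass.edges_subset_edgeSet (by simpa [hpq] using he)
  simp at this

lemma IsTree.deleteEdges_sup_edge (hH : H.IsTree) {g : Sym2 V} {u v : V}
    (hsep : ¬(H.deleteEdges {g}).Reachable u v) : (H.deleteEdges {g} ⊔ edge u v).IsTree := by
  induction g using Sym2.ind with
  | _ x y =>
  set D := H.deleteEdges {s(x, y)}
  refine ⟨?_, (hH.isAcyclic.anti (deleteEdges_le _)).sup_edge_of_not_reachable hsep⟩
  have hD : D ≤ D ⊔ edge u v := le_sup_left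
  have huv : (D ⊔ edge u v).Reachable u v := by
    refine Adj.reachable (Or.inr ?_)
    simp only [edge_adj, and_self, true_or, true_and]
    rintro rfl
    exact hsep .rfl
  have hxy : (D ⊔ edge u v).Reachable x u ∧ (D ⊔ edge u v).Reachable y u := by
    rcases (hH.connected u x).deleteEdges_reachable_or y with hux | huy <;>
      rcases (hH.connected v x).deleteEdges_reachable_or y with hvx | hvy
    · exact absurd (hux.trans hvx.symm) hsep
    · exact ⟨(hux.mono hD).symm, (hvy.mono hD).symm.trans huv.symm⟩
    · exact ⟨(hvx.mono hD).symm.trans huv.symm, (huy.mono hD).symm⟩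
    · exact absurd (huy.trans hvy.symm) hsep
  refine (connected_iff_exists_forall_reachable _).mpr ⟨u, fun a => .symm ?_⟩
  rcases (hH.connected a x).deleteEdges_reachable_or y with hax | hay
  · exact (hax.mono hD).trans hxy.1
  · exact (hay.mono hD).trans hxy.2

end SimpleGraph

open SimpleGraph

section SpanningTree

variable {V : Type*} {G : SimpleGraph V} {T : Finset (Sym2 V)}

lemma IsSpanningTree.isTree (hT : IsSpanningTree G T) : (fromEdgeSet (T : Set (Sym2 V))).IsTree :=
  ⟨hT.2.1, hT.2.2⟩

variable [DecidableEq V]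

lemma fromEdgeSet_insert_erase (T : Finset (Sym2 V)) (g : Sym2 V) (u v : V) :
    fromEdgeSet ↑(insert s(u, v) (T.erase g)) = (fromEdgeSet ↑T).deleteEdges {g} ⊔ edge u v := by
  rw [deleteEdges_fromEdgeSet, edge, ← fromEdgeSet_union, Finset.coe_insert, Finset.coe_erase,
    Set.insert_eq, Set.union_comm]

lemma IsSpanningTree.exchange (hT : IsSpanningTree G T) {g : Sym2 V} {u v : V}
    (huv : s(u, v) ∈ G.edgeSet) (hsep : ¬((fromEdgeSet ↑T).deleteEdges {g}).Reachable u v) :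
    IsSpanningTree G (insert s(u, v) (T.erase g)) := by
  have htree := hT.isTree.deleteEdges_sup_edge hsep
  rw [← fromEdgeSet_insert_erase] at htree
  refine ⟨?_, htree.connected, htree.isAcyclic⟩
  intro e he
  rcases Finset.mem_insert.mp he with rfl | he
  · exact huv
  · exact hT.1 (Finset.mem_of_mem_erase he)

lemma IsMST.le_of_exchange {w : Sym2 V → ℝ} (hT : IsMST G w T) {g : Sym2 V} (hg : g ∈ T)
    {u v : V} (huv : s(u, v) ∈ G.edgeSet)
    (hsep : ¬((fromEdgeSet ↑T).deleteEdges {g}).Reachable u v) : w g ≤ w s(u, v) := by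
  have hnew : s(u, v) ∉ T.erase g := fun h => hsep <| Adj.reachable <| by
    simpa [(G.mem_edgeSet.mp huv).ne] using (Finset.mem_erase.mp h).symm
  have := hT.2 _ (hT.1.exchange huv hsep)
  rw [wsum, wsum, Finset.sum_insert hnew, Finset.sum_erase_eq_sub hg] at this
  linarith

end SpanningTree

theorem stmt_6_general {V : Type*} [DecidableEq V] (G : SimpleGraph V)
    (w₁ w₂ : Sym2 V → ℝ)
    (hw₂ : Set.InjOn w₂ G.edgeSet)
    (hle : ∀ e ∈ G.edgeSet, w₁ e ≤ w₂ e)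
    (Eplus : Finset (Sym2 V)) (hEp : ∀ e, e ∈ Eplus ↔ e ∈ G.edgeSet ∧ w₁ e < w₂ e)
    (T₁ T₂ : Finset (Sym2 V)) (hT₁ : IsMST G w₁ T₁) (hT₂ : IsMST G w₂ T₂) :
    T₁ \ Eplus ⊆ T₂ := by
  intro e he
  induction e using Sym2.ind with
  | _ a b =>
  obtain ⟨heT₁, heE⟩ := Finset.mem_sdiff.mp he
  by_contra heT₂
  have heG := hT₁.1.1 heT₁
  have hwe : w₂ s(a, b) ≤ w₁ s(a, b) := not_lt.mp fun h => heE ((hEp _).mpr ⟨heG, h⟩)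
  set D₁ := (fromEdgeSet (T₁ : Set (Sym2 V))).deleteEdges {s(a, b)}
  have hab : ¬D₁.Reachable a b := isAcyclic_iff_forall_adj_isBridge.mp hT₁.1.isTree.isAcyclic
    ((fromEdgeSet_adj _).mpr ⟨heT₁, (G.mem_edgeSet.mp heG).ne⟩)
  obtain ⟨p, hp⟩ := hT₂.1.isTree.connected.preconnected.exists_isPath a b
  obtain ⟨d, hd, hax, hay⟩ := p.exists_boundary_dart {v | D₁.Reachable a v} .rfl hab
  have hfp : d.edge ∈ p.edges := List.mem_map_of_mem hd
  have hfT₂ : d.edge ∈ T₂ := (p.edges_subset_edgeSet hfp).1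
  have hfG := hT₂.1.1 hfT₂
  have h₁ : w₁ s(a, b) ≤ w₁ d.edge :=
    hT₁.le_of_exchange heT₁ hfG fun hxy => hay (hax.trans hxy)
  have h₂ : w₂ d.edge ≤ w₂ s(a, b) :=
    hT₂.le_of_exchange hfT₂ heG
      (hT₂.1.isTree.isAcyclic.not_reachable_deleteEdges_of_mem_edges hp hfp)
  have hfe : d.edge = s(a, b) := hw₂ hfG heG (by linarith [hle _ hfG])
  exact heT₂ (hfe ▸ hfT₂)

/-- Let `w₁ ≤ w₂` be injective edge weights on a finite connected simple
graph, and `E⁺ = { e : w₂(e) > w₁(e) }`. If `T₁` is an MST for `w₁` and `T₂` an MST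
for `w₂`, then `T₁ \ E⁺ ⊆ T₂`. -/
theorem stmt_6 {V : Type*} [Fintype V] [DecidableEq V] (G : SimpleGraph V)
    (hG : G.Connected) (w₁ w₂ : Sym2 V → ℝ)
    (hw₁ : Set.InjOn w₁ G.edgeSet) (hw₂ : Set.InjOn w₂ G.edgeSet)
    (hle : ∀ e ∈ G.edgeSet, w₁ e ≤ w₂ e)
    (Eplus : Finset (Sym2 V)) (hEp : ∀ e, e ∈ Eplus ↔ e ∈ G.edgeSet ∧ w₁ e < w₂ e)
    (T₁ T₂ : Finset (Sym2 V)) (hT₁ : IsMST G w₁ T₁) (hT₂ : IsMST G w₂ T₂) :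
    T₁ \ Eplus ⊆ T₂ :=
  stmt_6_general G w₁ w₂ hw₂ hle Eplus hEp T₁ T₂ hT₁ hT₂
end

section
/- Let T₁ and T₂ be finite trees on disjoint vertex sets, each with at least two vertices, with k₁ and k₂ darts respectively. Let τ₁ and τ₂ be Euler tour labellings of T₁ and T₂ such that some dart with tail v₁ ∈ V(T₁) has τ₁-label 0 and some dart with tail v₂ ∈ V(T₂) has τ₂-label 0. Let T' be the tree obtained from T₁ ∪ T₂ by adding the edge {v₁, v₂}. Then the labelling L of the darts of T' defined by L(d) = τ₁(d) for darts d of T₁, L(v₁,v₂) = k₁, L(d) = τ₂(d) + k₁ + 1 for darts d of T₂, and L(v₂,v₁) = k₁ + k₂ + 1, is an Euler tour labelling of T', and the dart of T' with label 0 has tail v₁. -/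
/-- `τ` is an Euler tour labelling of the darts of `T` with labels `{0, …, k-1}`:
it is a bijection onto `{0, …, k-1}` such that the head of the dart labelled `i`
equals the tail of the dart labelled `(i+1) mod k`. -/
def IsEulerTourLabelling {V : Type*} (T : SimpleGraph V) (k : ℕ) (τ : T.Dart → ℕ) : Prop :=
  (∀ d : T.Dart, τ d < k) ∧
  (∀ i : ℕ, i < k → ∃! d : T.Dart, τ d = i) ∧
  (∀ d e : T.Dart, τ e = (τ d + 1) % k → d.snd = e.fst)

/-- The graph on the disjoint union `V₁ ⊕ V₂` obtained from `T₁` and `T₂` (on disjoint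
vertex sets) by adding the single edge `{v₁, v₂}`. -/
def joinGraph {V₁ V₂ : Type*} (T₁ : SimpleGraph V₁) (T₂ : SimpleGraph V₂)
    (v₁ : V₁) (v₂ : V₂) : SimpleGraph (V₁ ⊕ V₂) where
  Adj a b :=
    match a, b with
    | Sum.inl x, Sum.inl y => T₁.Adj x y
    | Sum.inr x, Sum.inr y => T₂.Adj x y
    | Sum.inl x, Sum.inr y => x = v₁ ∧ y = v₂
    | Sum.inr x, Sum.inl y => x = v₂ ∧ y = v₁
  symm := by
    constructor
    rintro (x | x) (y | y) h
    · exact h.symm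
    · exact ⟨h.2, h.1⟩
    · exact ⟨h.2, h.1⟩
    · exact h.symm
  loopless := by
    constructor
    rintro (x | x) h
    · exact T₁.loopless.irrefl x h
    · exact T₂.loopless.irrefl x h

lemma join_dart_cases {V₁ V₂ : Type*} {T₁ : SimpleGraph V₁} {T₂ : SimpleGraph V₂}
    {v₁ : V₁} {v₂ : V₂} (d : (joinGraph T₁ T₂ v₁ v₂).Dart) :
    (∃ e : T₁.Dart, d.toProd = (Sum.inl e.fst, Sum.inl e.snd)) ∨
    (∃ e : T₂.Dart, d.toProd = (Sum.inr e.fst, Sum.inr e.snd)) ∨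
    d.toProd = (Sum.inl v₁, Sum.inr v₂) ∨
    d.toProd = (Sum.inr v₂, Sum.inl v₁) := by
  obtain ⟨⟨a|a, b|b⟩, h⟩ := d
  · exact Or.inl ⟨⟨(a,b), h⟩, rfl⟩
  · obtain ⟨rfl, rfl⟩ := h; exact Or.inr (Or.inr (Or.inl rfl))
  · obtain ⟨rfl, rfl⟩ := h; exact Or.inr (Or.inr (Or.inr rfl))
  · exact Or.inr (Or.inl ⟨⟨(a,b), h⟩, rfl⟩)

/-- Given Euler tour labellings `τ₁, τ₂` of disjoint trees `T₁, T₂`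
(each on at least two vertices, with `k₁` resp. `k₂` darts) rooted at `v₁` resp. `v₂`
(i.e. a dart with tail `vᵢ` has label `0`), the labelling `L` of the darts of the tree
`T' = T₁ ∪ T₂ + {v₁,v₂}` defined by `L(d) = τ₁(d)` on darts of `T₁`, `L(v₁,v₂) = k₁`,
`L(d) = τ₂(d) + k₁ + 1` on darts of `T₂`, and `L(v₂,v₁) = k₁ + k₂ + 1`, is an Euler tour
labelling of `T'`, and the dart of `T'` with label `0` has tail `v₁`. -/
theorem stmt_17 {V₁ V₂ : Type*} [Fintype V₁] [Fintype V₂]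
    (T₁ : SimpleGraph V₁) (T₂ : SimpleGraph V₂) (hT₁ : T₁.IsTree) (hT₂ : T₂.IsTree)
    (h₁ : 2 ≤ Fintype.card V₁) (h₂ : 2 ≤ Fintype.card V₂)
    (k₁ k₂ : ℕ) (hk₁ : k₁ = 2 * (Fintype.card V₁ - 1)) (hk₂ : k₂ = 2 * (Fintype.card V₂ - 1))
    (v₁ : V₁) (v₂ : V₂)
    (τ₁ : T₁.Dart → ℕ) (τ₂ : T₂.Dart → ℕ)
    (hτ₁ : IsEulerTourLabelling T₁ k₁ τ₁) (hτ₂ : IsEulerTourLabelling T₂ k₂ τ₂)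
    (hr₁ : ∃ d : T₁.Dart, d.fst = v₁ ∧ τ₁ d = 0)
    (hr₂ : ∃ d : T₂.Dart, d.fst = v₂ ∧ τ₂ d = 0)
    (L : (joinGraph T₁ T₂ v₁ v₂).Dart → ℕ)
    (hL₁ : ∀ (d : T₁.Dart) (d' : (joinGraph T₁ T₂ v₁ v₂).Dart),
      d'.toProd = (Sum.inl d.fst, Sum.inl d.snd) → L d' = τ₁ d)
    (hL₂ : ∀ (d : T₂.Dart) (d' : (joinGraph T₁ T₂ v₁ v₂).Dart),
      d'.toProd = (Sum.inr d.fst, Sum.inr d.snd) → L d' = τ₂ d + k₁ + 1)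
    (hLb : ∀ d' : (joinGraph T₁ T₂ v₁ v₂).Dart,
      d'.toProd = (Sum.inl v₁, Sum.inr v₂) → L d' = k₁)
    (hLb' : ∀ d' : (joinGraph T₁ T₂ v₁ v₂).Dart,
      d'.toProd = (Sum.inr v₂, Sum.inl v₁) → L d' = k₁ + k₂ + 1) :
    IsEulerTourLabelling (joinGraph T₁ T₂ v₁ v₂) (k₁ + k₂ + 2) L ∧
    ∀ d : (joinGraph T₁ T₂ v₁ v₂).Dart, L d = 0 → d.fst = Sum.inl v₁ := by
  obtain ⟨hb₁, hu₁, hs₁⟩ := hτ₁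
  obtain ⟨hb₂, hu₂, hs₂⟩ := hτ₂
  have hk₁2 : 2 ≤ k₁ := by omega
  have hk₂2 : 2 ≤ k₂ := by omega
  -- classification of darts with their labels
  have classify : ∀ d' : (joinGraph T₁ T₂ v₁ v₂).Dart,
      (∃ e : T₁.Dart, L d' = τ₁ e ∧ L d' < k₁ ∧
        d'.toProd = (Sum.inl e.fst, Sum.inl e.snd)) ∨
      (∃ e : T₂.Dart, L d' = τ₂ e + k₁ + 1 ∧ k₁ + 1 ≤ L d' ∧ L d' ≤ k₁ + k₂ ∧
        d'.toProd = (Sum.inr e.fst, Sum.inr e.snd)) ∨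
      (L d' = k₁ ∧ d'.toProd = (Sum.inl v₁, Sum.inr v₂)) ∨
      (L d' = k₁ + k₂ + 1 ∧ d'.toProd = (Sum.inr v₂, Sum.inl v₁)) := by
    intro d'
    rcases join_dart_cases d' with ⟨e, h⟩ | ⟨e, h⟩ | h | h
    · have hLe := hL₁ e d' h
      exact Or.inl ⟨e, hLe, by have := hb₁ e; omega, h⟩
    · have hLe := hL₂ e d' h
      exact Or.inr (Or.inl ⟨e, hLe, by have := hb₂ e; omega, by have := hb₂ e; omega, h⟩)
    · exact Or.inr (Or.inr (Or.inl ⟨hLb d' h, h⟩))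
    · exact Or.inr (Or.inr (Or.inr ⟨hLb' d' h, h⟩))
  -- injectivity of L
  have hinj : ∀ d e : (joinGraph T₁ T₂ v₁ v₂).Dart, L d = L e → d = e := by
    intro d e h
    rcases classify d with ⟨a, ha1, ha2, ha3⟩ | ⟨a, ha1, ha2, ha2', ha3⟩ | ⟨ha1, ha3⟩ | ⟨ha1, ha3⟩ <;>
      rcases classify e with ⟨b, hb1, hb2, hb3⟩ | ⟨b, hb1, hb2, hb2', hb3⟩ | ⟨hb1, hb3⟩ | ⟨hb1, hb3⟩ <;>
      try omega
    · have hab : a = b := by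
        obtain ⟨c, -, hc⟩ := hu₁ (τ₁ a) (by have := hb₁ a; omega)
        exact (hc a rfl).trans (hc b (by omega)).symm
      rw [hab] at ha3
      exact SimpleGraph.Dart.ext _ _ (ha3.trans hb3.symm)
    · have hab : a = b := by
        obtain ⟨c, -, hc⟩ := hu₂ (τ₂ a) (by have := hb₂ a; omega)
        exact (hc a rfl).trans (hc b (by omega)).symm
      rw [hab] at ha3
      exact SimpleGraph.Dart.ext _ _ (ha3.trans hb3.symm)
    · exact SimpleGraph.Dart.ext _ _ (ha3.trans hb3.symm)
    · exact SimpleGraph.Dart.ext _ _ (ha3.trans hb3.symm)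
  -- existence of darts for each label
  have hex : ∀ i : ℕ, i < k₁ + k₂ + 2 → ∃ d : (joinGraph T₁ T₂ v₁ v₂).Dart, L d = i := by
    intro i hi
    rcases lt_or_ge i k₁ with h | h
    · obtain ⟨e, he, -⟩ := hu₁ i h
      exact ⟨⟨(Sum.inl e.fst, Sum.inl e.snd), e.adj⟩, (hL₁ e _ rfl).trans he⟩
    rcases eq_or_lt_of_le h with h' | h'
    · exact ⟨⟨(Sum.inl v₁, Sum.inr v₂), ⟨rfl, rfl⟩⟩, (hLb _ rfl).trans h'⟩
    rcases lt_or_ge i (k₁ + k₂ + 1) with h'' | h''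
    · obtain ⟨e, he, -⟩ := hu₂ (i - k₁ - 1) (by omega)
      exact ⟨⟨(Sum.inr e.fst, Sum.inr e.snd), e.adj⟩, by rw [hL₂ e _ rfl, he]; omega⟩
    · exact ⟨⟨(Sum.inr v₂, Sum.inl v₁), ⟨rfl, rfl⟩⟩, by rw [hLb' _ rfl]; omega⟩
  -- roots
  have hz₁ : ∀ d : T₁.Dart, τ₁ d = 0 → d.fst = v₁ := by
    obtain ⟨d₀, hd₀f, hd₀⟩ := hr₁
    intro d hd
    obtain ⟨c, -, hc⟩ := hu₁ 0 (by omega)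
    have : d = d₀ := (hc d hd).trans (hc d₀ hd₀).symm
    rw [this]; exact hd₀f
  have hz₂ : ∀ d : T₂.Dart, τ₂ d = 0 → d.fst = v₂ := by
    obtain ⟨d₀, hd₀f, hd₀⟩ := hr₂
    intro d hd
    obtain ⟨c, -, hc⟩ := hu₂ 0 (by omega)
    have : d = d₀ := (hc d hd).trans (hc d₀ hd₀).symm
    rw [this]; exact hd₀f
  have hlast₁ : ∀ d : T₁.Dart, τ₁ d + 1 = k₁ → d.snd = v₁ := by
    intro d hd
    obtain ⟨d₀, hd₀f, hd₀⟩ := hr₁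
    have := hs₁ d d₀ (by rw [hd₀, hd, Nat.mod_self])
    rw [this]; exact hd₀f
  have hlast₂ : ∀ d : T₂.Dart, τ₂ d + 1 = k₂ → d.snd = v₂ := by
    intro d hd
    obtain ⟨d₀, hd₀f, hd₀⟩ := hr₂
    have := hs₂ d d₀ (by rw [hd₀, hd, Nat.mod_self])
    rw [this]; exact hd₀f
  refine ⟨⟨?_, ?_, ?_⟩, ?_⟩
  · -- bounds
    intro d
    rcases classify d with ⟨a, ha1, ha2, ha3⟩ | ⟨a, ha1, ha2, ha2', ha3⟩ | ⟨ha1, ha3⟩ | ⟨ha1, ha3⟩ <;>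
      omega
  · -- bijectivity
    intro i hi
    obtain ⟨d, hd⟩ := hex i hi
    exact ⟨d, hd, fun y hy => hinj y d (hy.trans hd.symm)⟩
  · -- successor condition
    intro d e hde
    rcases classify d with ⟨a, ha1, ha2, ha3⟩ | ⟨a, ha1, ha2, ha2', ha3⟩ | ⟨ha1, ha3⟩ | ⟨ha1, ha3⟩
    · -- d is a T₁ dart
      rw [Nat.mod_eq_of_lt (by omega)] at hde
      have hd2 : d.snd = Sum.inl a.snd := congrArg Prod.snd ha3
      rcases classify e with ⟨b, hb1, hb2, hb3⟩ | ⟨b, hb1, hb2, hb2', hb3⟩ | ⟨hb1, hb3⟩ | ⟨hb1, hb3⟩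
      · have hab : a.snd = b.fst := hs₁ a b (by rw [Nat.mod_eq_of_lt (by omega)]; omega)
        have he1 : e.fst = Sum.inl b.fst := congrArg Prod.fst hb3
        rw [hd2, he1, hab]
      · omega
      · have he1 : e.fst = Sum.inl v₁ := congrArg Prod.fst hb3
        rw [hd2, he1, hlast₁ a (by omega)]
      · omega
    · -- d is a T₂ dart
      rw [Nat.mod_eq_of_lt (by omega)] at hde
      have hd2 : d.snd = Sum.inr a.snd := congrArg Prod.snd ha3
      rcases classify e with ⟨b, hb1, hb2, hb3⟩ | ⟨b, hb1, hb2, hb2', hb3⟩ | ⟨hb1, hb3⟩ | ⟨hb1, hb3⟩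
      · omega
      · have hab : a.snd = b.fst := hs₂ a b (by rw [Nat.mod_eq_of_lt (by omega)]; omega)
        have he1 : e.fst = Sum.inr b.fst := congrArg Prod.fst hb3
        rw [hd2, he1, hab]
      · omega
      · have he1 : e.fst = Sum.inr v₂ := congrArg Prod.fst hb3
        rw [hd2, he1, hlast₂ a (by have := hb₂ a; omega)]
    · -- d is the bridge dart (v₁, v₂)
      rw [Nat.mod_eq_of_lt (by omega)] at hde
      have hd2 : d.snd = Sum.inr v₂ := congrArg Prod.snd ha3
      rcases classify e with ⟨b, hb1, hb2, hb3⟩ | ⟨b, hb1, hb2, hb2', hb3⟩ | ⟨hb1, hb3⟩ | ⟨hb1, hb3⟩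
      · omega
      · have he1 : e.fst = Sum.inr b.fst := congrArg Prod.fst hb3
        rw [hd2, he1, hz₂ b (by omega)]
      · omega
      · omega
    · -- d is the reverse bridge dart (v₂, v₁)
      have h0 : (L d + 1) % (k₁ + k₂ + 2) = 0 := by
        have : L d + 1 = k₁ + k₂ + 2 := by omega
        rw [this, Nat.mod_self]
      rw [h0] at hde
      have hd2 : d.snd = Sum.inl v₁ := congrArg Prod.snd ha3
      rcases classify e with ⟨b, hb1, hb2, hb3⟩ | ⟨b, hb1, hb2, hb2', hb3⟩ | ⟨hb1, hb3⟩ | ⟨hb1, hb3⟩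
      · have he1 : e.fst = Sum.inl b.fst := congrArg Prod.fst hb3
        rw [hd2, he1, hz₁ b (by omega)]
      · omega
      · omega
      · omega
  · -- root of the joined labelling
    intro d hd
    rcases classify d with ⟨a, ha1, ha2, ha3⟩ | ⟨a, ha1, ha2, ha2', ha3⟩ | ⟨ha1, ha3⟩ | ⟨ha1, ha3⟩
    · have hd1 : d.fst = Sum.inl a.fst := congrArg Prod.fst ha3
      rw [hd1, hz₁ a (by omega)]
    · omega
    · omega
    · omega
end
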